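/- arXiv:1704.04578 — 2 statements merged into one kernel-verified Lean document; each statement's English description precedes it below -/
import Mathlib

section
/- Let D ∈ ℝ^{n×n} be symmetric positive semidefinite and consider the quadratic program min{ (1/2)xᵀDx + cᵀx : x ≥ 0, Ax = b } with nonempty solution set S*. Then D·S* is a singleton; i.e., for any two optimal solutions s₁*, s₂* ∈ S*, D·s₁* = D·s₂*. -/
open Matrix

/-- For a convex QP `min (1/2)xᵀDx + cᵀx` over `{x ≥ 0, Ax = b}` with `D` symmetric PSD,
    `D·S*` is a singleton: any two minimizers `s₁, s₂` satisfy `D s₁ = D s₂`. -/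
theorem stmt13 (n m : ℕ) (D : Matrix (Fin n) (Fin n) ℝ) (hD : D.PosSemidef)
    (A : Matrix (Fin m) (Fin n) ℝ) (b : Fin m → ℝ) (c : Fin n → ℝ)
    (s₁ s₂ : Fin n → ℝ)
    (hfeas₁ : (∀ i, 0 ≤ s₁ i) ∧ A.mulVec s₁ = b)
    (hfeas₂ : (∀ i, 0 ≤ s₂ i) ∧ A.mulVec s₂ = b)
    (hmin₁ : ∀ x : Fin n → ℝ, ((∀ i, 0 ≤ x i) ∧ A.mulVec x = b) →
      (1 / 2) * (s₁ ⬝ᵥ D.mulVec s₁) + c ⬝ᵥ s₁ ≤ (1 / 2) * (x ⬝ᵥ D.mulVec x) + c ⬝ᵥ x)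
    (hmin₂ : ∀ x : Fin n → ℝ, ((∀ i, 0 ≤ x i) ∧ A.mulVec x = b) →
      (1 / 2) * (s₂ ⬝ᵥ D.mulVec s₂) + c ⬝ᵥ s₂ ≤ (1 / 2) * (x ⬝ᵥ D.mulVec x) + c ⬝ᵥ x) :
    D.mulVec s₁ = D.mulVec s₂ := by
  -- midpoint is feasible
  set mid : Fin n → ℝ := (1/2 : ℝ) • (s₁ + s₂) with hmid
  have hfmid : (∀ i, 0 ≤ mid i) ∧ A.mulVec mid = b := by
    constructor
    · intro i
      have := hfeas₁.1 i
      have := hfeas₂.1 i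
      simp only [hmid, Pi.smul_apply, Pi.add_apply, smul_eq_mul]
      linarith
    · rw [hmid, mulVec_smul, mulVec_add, hfeas₁.2, hfeas₂.2]
      ext i; simp; ring
  have h1 := hmin₁ mid hfmid
  have h2 := hmin₂ mid hfmid
  -- symmetry
  have hDT : Dᵀ = D := by
    have := hD.1
    rwa [Matrix.IsHermitian, conjTranspose_eq_transpose_of_trivial] at this
  have hsym : s₁ ⬝ᵥ D.mulVec s₂ = s₂ ⬝ᵥ D.mulVec s₁ := by
    rw [dotProduct_mulVec, dotProduct_comm, ← Matrix.mulVec_transpose, hDT]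
  -- expand quadratic form at midpoint
  have hexp : mid ⬝ᵥ D.mulVec mid =
      (1/4) * (s₁ ⬝ᵥ D.mulVec s₁) + (1/2) * (s₁ ⬝ᵥ D.mulVec s₂)
        + (1/4) * (s₂ ⬝ᵥ D.mulVec s₂) := by
    simp only [hmid, mulVec_smul, mulVec_add, smul_dotProduct, dotProduct_smul,
      add_dotProduct, dotProduct_add, smul_eq_mul]
    rw [hsym]; ring
  have hcmid : c ⬝ᵥ mid = (1/2) * (c ⬝ᵥ s₁) + (1/2) * (c ⬝ᵥ s₂) := by
    simp only [hmid, dotProduct_smul, dotProduct_add, smul_eq_mul]; ring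
  set d := s₁ - s₂ with hd
  have hq : d ⬝ᵥ D.mulVec d =
      s₁ ⬝ᵥ D.mulVec s₁ - 2 * (s₁ ⬝ᵥ D.mulVec s₂) + s₂ ⬝ᵥ D.mulVec s₂ := by
    simp only [hd, mulVec_sub, sub_dotProduct, dotProduct_sub]
    rw [hsym]; ring
  have hle : d ⬝ᵥ D.mulVec d ≤ 0 := by
    rw [hexp, hcmid] at h1 h2
    rw [hq]; linarith
  have hz : d ⬝ᵥ D.mulVec d = 0 :=
    le_antisymm hle (by have h := hD.dotProduct_mulVec_nonneg d; rwa [star_trivial] at h)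
  have hdz : D.mulVec d = 0 := by
    have := (hD.dotProduct_mulVec_zero_iff d).mp (by simpa using hz)
    exact this
  have : D.mulVec s₁ - D.mulVec s₂ = 0 := by
    rw [← mulVec_sub]; exact hdz
  exact sub_eq_zero.mp this
end

section
/- Let ‖·‖_P denote the weighted norm ‖x‖_P² = ∑_{i=1}^N ‖x_i‖²/p_i on ℝⁿ = ∏ ℝ^{n_i}, where 0 < p_i ≤ 1. Let a ∈ (0,1) and suppose vectors x, x* ∈ ∏ X_i and x̂(x) satisfy ∑_i ‖x̂_i(x) − x_i*‖² ≤ a²·∑_i ‖x_i − x_i*‖². Define t with t_i = x_i + χ_i(x̂_i(x) − x_i) where χ_i are independent Bernoulli(p_i) random variables (independent of x). Then E[‖t − x*‖_P²] = ‖x − x*‖_P² + ∑_i ‖x̂_i(x) − x_i*‖² − ∑_i ‖x_i − x_i*‖² ≤ ‖x − x*‖_P² − (1 − a²)‖x − x*‖², and consequently E[‖t − x*‖_P²] ≤ (1 − p_min(1 − a²))·‖x − x*‖_P², where p_min = min_i p_i. -/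
theorem sum_pi_bool_prod {N : ℕ} (h : Fin N → Bool → ℝ) :
    ∑ χ : Fin N → Bool, ∏ j, h j (χ j) = ∏ j, (h j true + h j false) := by
  have := Finset.prod_univ_sum (fun _ : Fin N => (Finset.univ : Finset Bool)) h
  rw [Fintype.piFinset_univ] at this
  rw [← this]
  congr 1
  ext j
  simp [Fintype.sum_bool]

/-- Single-step contraction estimate for the randomized BR scheme in the
    weighted norm `‖x‖_P² = ∑ ‖x_i‖²/p_i`. -/
theorem stmt18 (N : ℕ) (hN : 0 < N) (d : Fin N → ℕ)
    (p : Fin N → ℝ) (hp : ∀ i, 0 < p i ∧ p i ≤ 1)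
    (a : ℝ) (ha : a ∈ Set.Ioo (0 : ℝ) 1)
    (X : ∀ i, Set (EuclideanSpace ℝ (Fin (d i))))
    (x xstar xhat : ∀ i, EuclideanSpace ℝ (Fin (d i)))
    (hx : ∀ i, x i ∈ X i) (hxs : ∀ i, xstar i ∈ X i)
    (hcontr : ∑ i, ‖xhat i - xstar i‖ ^ 2 ≤ a ^ 2 * ∑ i, ‖x i - xstar i‖ ^ 2) :
    let normP2 : (∀ i, EuclideanSpace ℝ (Fin (d i))) → ℝ := fun z => ∑ i, ‖z i‖ ^ 2 / p i
    let E : ℝ := ∑ χ : Fin N → Bool, (∏ i, if χ i then p i else 1 - p i) *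
        normP2 (fun i => (if χ i then xhat i else x i) - xstar i)
    E = normP2 (fun i => x i - xstar i)
        + ∑ i, ‖xhat i - xstar i‖ ^ 2 - ∑ i, ‖x i - xstar i‖ ^ 2 ∧
    E ≤ normP2 (fun i => x i - xstar i) - (1 - a ^ 2) * ∑ i, ‖x i - xstar i‖ ^ 2 ∧
    E ≤ (1 - (⨅ i, p i) * (1 - a ^ 2)) * normP2 (fun i => x i - xstar i) := by
  intro normP2 E
  have hp0 : ∀ i, 0 < p i := fun i => (hp i).1
  set A : Fin N → ℝ := fun i => ‖xhat i - xstar i‖ ^ 2 with hA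
  set B : Fin N → ℝ := fun i => ‖x i - xstar i‖ ^ 2 with hB
  set g : Fin N → Bool → ℝ := fun i b => ‖(if b then xhat i else x i) - xstar i‖ ^ 2 with hg
  set w : Fin N → Bool → ℝ := fun i b => if b then p i else 1 - p i with hw
  -- Step 1: compute E
  have hE : E = ∑ i, (p i * A i + (1 - p i) * B i) / p i := by
    have e1 : E = ∑ i, ∑ χ : Fin N → Bool, (∏ j, w j (χ j)) * (g i (χ i) / p i) := by
      show (∑ χ : Fin N → Bool, (∏ j, w j (χ j)) * ∑ i, g i (χ i) / p i) = _
      simp_rw [Finset.mul_sum]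
      exact Finset.sum_comm
    rw [e1]
    congr 1
    ext i
    have e2 : (∑ χ : Fin N → Bool, (∏ j, w j (χ j)) * (g i (χ i) / p i))
        = (∑ χ : Fin N → Bool, ∏ j, (w j (χ j) * (if j = i then g j (χ j) else 1))) / p i := by
      rw [Finset.sum_div]
      congr 1
      ext χ
      rw [Finset.prod_mul_distrib, Finset.prod_ite_eq' Finset.univ i (fun j => g j (χ j))]
      simp [mul_div_assoc]
    rw [e2, sum_pi_bool_prod (fun j b => w j b * (if j = i then g j b else 1))]
    congr 1
    rw [Finset.prod_eq_single i]
    · simp [hw, hg, hA, hB]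
    · intro j _ hj
      simp only [hw, hg, if_neg hj, mul_one]
      norm_num
    · simp
  have hterm : ∀ i, (p i * A i + (1 - p i) * B i) / p i = B i / p i + A i - B i := by
    intro i
    have := (hp0 i).ne'
    field_simp
    ring
  have hE' : E = normP2 (fun i => x i - xstar i) + ∑ i, A i - ∑ i, B i := by
    rw [hE]
    simp_rw [hterm]
    rw [Finset.sum_sub_distrib, Finset.sum_add_distrib]
  refine ⟨hE', ?_, ?_⟩
  · rw [hE']
    have : ∑ i, A i ≤ a ^ 2 * ∑ i, B i := hcontr
    linarith
  · rw [hE']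
    have hS : ∑ i, A i ≤ a ^ 2 * ∑ i, B i := hcontr
    have ha2 : 0 < 1 - a ^ 2 := by nlinarith [ha.1, ha.2]
    have hne : Nonempty (Fin N) := ⟨⟨0, hN⟩⟩
    have hbdd : BddBelow (Set.range p) := (Set.finite_range p).bddBelow
    have hinf_le : ∀ i, (⨅ i, p i) ≤ p i := fun i => ciInf_le hbdd i
    have hkey : (⨅ i, p i) * normP2 (fun i => x i - xstar i) ≤ ∑ i, B i := by
      have hnp : normP2 (fun i => x i - xstar i) = ∑ i, B i / p i := rfl
      rw [hnp, Finset.mul_sum]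
      apply Finset.sum_le_sum
      intro i _
      have hBi : (0:ℝ) ≤ B i := by positivity
      have hpne := (hp0 i).ne'
      calc (⨅ j, p j) * (B i / p i) ≤ p i * (B i / p i) :=
            mul_le_mul_of_nonneg_right (hinf_le i) (div_nonneg hBi (hp0 i).le)
        _ = B i := by field_simp
    nlinarith [hkey, hS, mul_le_mul_of_nonneg_left hkey ha2.le]
end
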